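/- arXiv:math/0603048 — 4 statements merged into one kernel-verified Lean document; each statement's English description precedes it below -/
import Mathlib

section
/- Let r > 0 and suppose the closed disk {ζ ∈ ℂ : |ζ| ≤ r} is such that v + ζG − ζ²v̄ ∈ U for all |ζ| ≤ r, where v ∈ U, G ∈ ℂ^{n+1}, and v̄ denotes the componentwise complex conjugate of v. Then the contour integral (1/(2πi)) ∮_{|ζ|=r} F(v + ζG − ζ²v̄)/ζ³ dζ equals (1/2) ∑_{I,J} F_{IJ}(v) G^I G^J − ∑_I F_I(v) v̄^I. -/
open Complex ComplexConjugate

/-- First complex partial derivative `F_I` of `F` at `v`. -/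
noncomputable def FI (m : ℕ) (F : (Fin m → ℂ) → ℂ) (v : Fin m → ℂ) (I : Fin m) : ℂ :=
  fderiv ℂ F v (Pi.single I 1)

/-- Second complex partial derivative `F_{IJ}` of `F` at `v`. -/
noncomputable def FIJ (m : ℕ) (F : (Fin m → ℂ) → ℂ) (v : Fin m → ℂ) (I J : Fin m) : ℂ :=
  fderiv ℂ (fun x => FI m F x J) v (Pi.single I 1)




open Metric

-- L1: expansion of a CLM on Pi type
lemma clm_eq_sum {m : ℕ} {M : Type*} [NormedAddCommGroup M] [NormedSpace ℂ M]
    (T : (Fin m → ℂ) →L[ℂ] M) (w : Fin m → ℂ) :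
    T w = ∑ i, w i • T (Pi.single i 1) := by
  have hw : w = ∑ i, w i • (Pi.single i 1 : Fin m → ℂ) := by
    funext j
    simp [Finset.sum_apply, Pi.single_apply, Finset.sum_ite_eq']
  conv_lhs => rw [hw]
  rw [map_sum]
  simp

-- L2: operator norm bound from column bounds
lemma opNorm_le_of_cols {m : ℕ} (T : (Fin m → ℂ) →L[ℂ] ℂ) {C : ℝ} (hC : 0 ≤ C)
    (h : ∀ i, ‖T (Pi.single i 1)‖ ≤ C) : ‖T‖ ≤ m * C := by
  refine ContinuousLinearMap.opNorm_le_bound _ (by positivity) fun w => ?_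
  rw [clm_eq_sum]
  calc ‖∑ i, w i • T (Pi.single i 1)‖ ≤ ∑ i, ‖w i • T (Pi.single i 1)‖ :=
        norm_sum_le _ _
    _ ≤ ∑ _i : Fin m, C * ‖w‖ := by
        refine Finset.sum_le_sum fun i _ => ?_
        rw [norm_smul]
        calc ‖w i‖ * ‖T (Pi.single i 1)‖ ≤ ‖w‖ * C := by
              refine mul_le_mul (norm_le_pi_norm w i) (h i) (norm_nonneg _) (norm_nonneg _)
          _ = C * ‖w‖ := mul_comm _ _
    _ = m * C * ‖w‖ := by rw [Finset.sum_const]; simp [mul_assoc]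

-- L3: slice derivative
lemma fderiv_eq_deriv_slice {m : ℕ} {F : (Fin m → ℂ) → ℂ} {x : Fin m → ℂ}
    (hF : DifferentiableAt ℂ F x) (w : Fin m → ℂ) :
    HasDerivAt (fun ζ : ℂ => F (x + ζ • w)) (fderiv ℂ F x w) 0 := by
  have hγ : HasDerivAt (fun ζ : ℂ => x + ζ • w) w 0 := by
    simpa using ((hasDerivAt_id (0:ℂ)).smul_const w).const_add x
  have hx : x + (0:ℂ) • w = x := by simp
  have hF' : HasFDerivAt F (fderiv ℂ F x) (x + (0:ℂ) • w) := by rw [hx]; exact hF.hasFDerivAt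
  exact hF'.comp_hasDerivAt 0 hγ

-- L4a: deriv at center as Cauchy power series coefficient
lemma deriv_eq_cauchyCoeff {h : ℂ → ℂ} {ρ : ℝ} (hρ : 0 < ρ)
    (hd : DifferentiableOn ℂ h (closedBall 0 ρ)) :
    deriv h 0 = cauchyPowerSeries h 0 ρ 1 (fun _ => 1) := by
  lift ρ to NNReal using hρ.le with R
  have hR : 0 < R := by exact_mod_cast hρ
  have P : HasFPowerSeriesOnBall h (cauchyPowerSeries h 0 R) 0 R :=
    hd.hasFPowerSeriesOnBall hR
  have key := P.factorial_smul (1 : ℂ) 1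
  simp only [Nat.factorial_one, one_smul] at key
  rw [← iteratedDeriv_eq_iteratedFDeriv, iteratedDeriv_one] at key
  exact key.symm

-- L4b: Cauchy estimate for the first derivative
lemma deriv_cauchy_bound {h : ℂ → ℂ} {ρ M : ℝ} (hρ : 0 < ρ)
    (hd : DifferentiableOn ℂ h (closedBall 0 ρ))
    (hM : ∀ z ∈ closedBall (0:ℂ) ρ, ‖h z‖ ≤ M) : ‖deriv h 0‖ ≤ M / ρ := by
  have hM0 : 0 ≤ M := le_trans (norm_nonneg _) (hM 0 (mem_closedBall_self hρ.le))
  rw [deriv_eq_cauchyCoeff hρ hd]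
  have h1 : ‖cauchyPowerSeries h 0 ρ 1 (fun _ => 1)‖ ≤ ‖cauchyPowerSeries h 0 ρ 1‖ := by
    simpa using (cauchyPowerSeries h 0 ρ 1).le_opNorm (fun _ => (1:ℂ))
  refine h1.trans ?_
  have h2 := norm_cauchyPowerSeries_le h 0 ρ 1
  refine h2.trans ?_
  have hint : ∫ θ in (0:ℝ)..2*Real.pi, ‖h (circleMap 0 ρ θ)‖ ≤ 2 * Real.pi * M := by
    have hcont : Continuous fun θ => ‖h (circleMap 0 ρ θ)‖ := by
      refine (hd.continuousOn.comp_continuous (continuous_circleMap 0 ρ) fun θ => ?_).norm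
      simpa [abs_of_pos hρ] using sphere_subset_closedBall (circleMap_mem_sphere 0 hρ.le θ)
    calc ∫ θ in (0:ℝ)..2*Real.pi, ‖h (circleMap 0 ρ θ)‖
        ≤ ∫ _θ in (0:ℝ)..2*Real.pi, M := by
          refine intervalIntegral.integral_mono_on (by positivity)
            (hcont.intervalIntegrable _ _) intervalIntegrable_const fun θ _ => ?_
          exact hM _ (sphere_subset_closedBall (by simpa [abs_of_pos hρ] using circleMap_mem_sphere 0 hρ.le θ))
      _ = 2 * Real.pi * M := by simp [mul_comm]
  calc ((2 * Real.pi)⁻¹ * ∫ θ in (0:ℝ)..2*Real.pi, ‖h (circleMap 0 ρ θ)‖) * |ρ|⁻¹ ^ 1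
      ≤ ((2 * Real.pi)⁻¹ * (2 * Real.pi * M)) * |ρ|⁻¹ ^ 1 := by
        have : (0:ℝ) ≤ |ρ|⁻¹ ^ 1 := by positivity
        refine mul_le_mul_of_nonneg_right (mul_le_mul_of_nonneg_left hint (by positivity)) this
    _ = M / ρ := by
        rw [abs_of_pos hρ]
        field_simp

set_option maxHeartbeats 1000000 in
set_option synthInstance.maxHeartbeats 400000 in
open MeasureTheory in
/-- Osgood-type lemma: the derivative of a holomorphic function on an open subset of `ℂ^m`
is differentiable. -/
lemma fderiv_differentiableAt {m : ℕ} {U : Set (Fin m → ℂ)} (hU : IsOpen U)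
    {F : (Fin m → ℂ) → ℂ} (hF : DifferentiableOn ℂ F U) {v : Fin m → ℂ} (hv : v ∈ U) :
    DifferentiableAt ℂ (fderiv ℂ F) v := by
  have hFd : ∀ x ∈ U, DifferentiableAt ℂ F x := fun x hx => hF.differentiableAt (hU.mem_nhds hx)
  obtain ⟨ε, hε, hball⟩ := Metric.isOpen_iff.1 hU v hv
  set ρ : ℝ := ε / 4 with hρdef
  have hρ : 0 < ρ := by positivity
  have h3 : closedBall v (3 * ρ) ⊆ U :=
    (closedBall_subset_ball (by rw [hρdef]; linarith)).trans hball
  obtain ⟨M, hM⟩ := (isCompact_closedBall v (3 * ρ)).exists_bound_of_continuousOn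
    (hF.continuousOn.mono h3)
  set C : ℝ := max M 0 with hCdef
  have hC0 : 0 ≤ C := le_max_right _ _
  have hMC : ∀ y ∈ closedBall v (3 * ρ), ‖F y‖ ≤ C := fun y hy => (hM y hy).trans (le_max_left _ _)
  -- membership helper
  have hmem2 : ∀ y ∈ closedBall v (2 * ρ), ∀ w : Fin m → ℂ, ‖w‖ ≤ 1 → ∀ ζ : ℂ,
      ‖ζ‖ ≤ ρ → y + ζ • w ∈ closedBall v (3 * ρ) := by
    intro y hy w hw ζ hζ
    rw [mem_closedBall, dist_eq_norm] at hy ⊢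
    calc ‖y + ζ • w - v‖ = ‖(y - v) + ζ • w‖ := by ring_nf
      _ ≤ ‖y - v‖ + ‖ζ • w‖ := norm_add_le _ _
      _ ≤ 2 * ρ + ρ * 1 := by
          refine add_le_add hy ?_
          rw [norm_smul]
          exact mul_le_mul (by simpa using hζ) hw (norm_nonneg _) hρ.le
      _ ≤ 3 * ρ := by linarith
  -- slice differentiability
  have hs : ∀ y ∈ closedBall v (2 * ρ), ∀ w : Fin m → ℂ, ‖w‖ ≤ 1 →
      DifferentiableOn ℂ (fun ζ : ℂ => F (y + ζ • w)) (closedBall 0 ρ) := by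
    intro y hy w hw ζ hζ
    refine DifferentiableAt.differentiableWithinAt ?_
    have h1 : DifferentiableAt ℂ (fun ζ : ℂ => y + ζ • w) ζ :=
      (((hasDerivAt_id ζ).smul_const w).const_add y).differentiableAt
    have h2 : DifferentiableAt ℂ F (y + ζ • w) := by
      refine hFd _ (h3 (hmem2 y hy w hw ζ ?_))
      simpa [Complex.dist_eq] using hζ
    exact h2.comp ζ h1
  -- uniform bound on fderiv over the middle ball
  have hfb : ∀ y ∈ closedBall v (2 * ρ), ‖fderiv ℂ F y‖ ≤ m * (C / ρ) := by
    intro y hy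
    refine opNorm_le_of_cols _ (by positivity) fun i => ?_
    have hy3 : y ∈ closedBall v (3 * ρ) := closedBall_subset_closedBall (by linarith) hy
    have hnorm1 : ‖(Pi.single i 1 : Fin m → ℂ)‖ ≤ 1 := by
      rw [Pi.norm_single]; simp
    have hder := fderiv_eq_deriv_slice (hFd y (h3 hy3)) (Pi.single i 1)
    rw [← hder.deriv]
    refine deriv_cauchy_bound hρ (hs y hy _ hnorm1) fun z hz => ?_
    exact hMC _ (hmem2 y hy _ hnorm1 z (by simpa [Complex.dist_eq] using hz))
  -- differentiability of each column x ↦ fderiv F x (e J)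
  have hUJ : ∀ J : Fin m, DifferentiableAt ℂ (fun x => fderiv ℂ F x (Pi.single J 1)) v := by
    intro J
    set eJ : Fin m → ℂ := Pi.single J 1 with heJ
    have heJ1 : ‖eJ‖ ≤ 1 := by rw [heJ, Pi.norm_single]; simp
    -- membership facts
    have hmemb : ∀ x ∈ ball v ρ, ∀ θ : ℝ, x + circleMap 0 ρ θ • eJ ∈ closedBall v (2 * ρ) := by
      intro x hx θ
      rw [mem_ball, dist_eq_norm] at hx
      rw [mem_closedBall, dist_eq_norm]
      calc ‖x + circleMap 0 ρ θ • eJ - v‖ = ‖(x - v) + circleMap 0 ρ θ • eJ‖ := by ring_nf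
        _ ≤ ‖x - v‖ + ‖circleMap 0 ρ θ • eJ‖ := norm_add_le _ _
        _ ≤ ρ + ρ * 1 := by
            refine add_le_add hx.le ?_
            rw [norm_smul]
            refine mul_le_mul ?_ heJ1 (norm_nonneg _) hρ.le
            simp [norm_circleMap_zero, abs_of_pos hρ]
        _ = 2 * ρ := by ring
    -- the integrand and its derivative in x
    set K : (Fin m → ℂ) → ℝ → ℂ := fun x θ => deriv (circleMap 0 ρ) θ •
      ((1 / (circleMap 0 ρ θ - 0)) ^ 1 • (circleMap 0 ρ θ - 0)⁻¹ •
        F (x + circleMap 0 ρ θ • eJ)) with hK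
    set K' : (Fin m → ℂ) → ℝ → ((Fin m → ℂ) →L[ℂ] ℂ) := fun x θ => deriv (circleMap 0 ρ) θ •
      ((1 / (circleMap 0 ρ θ - 0)) ^ 1 • (circleMap 0 ρ θ - 0)⁻¹ •
        fderiv ℂ F (x + circleMap 0 ρ θ • eJ)) with hK'
    -- K x is continuous in θ when x ∈ ball v ρ
    have hKcont : ∀ x ∈ ball v ρ, Continuous (K x) := by
      intro x hx
      have hne : ∀ θ : ℝ, circleMap 0 ρ θ ≠ 0 := fun θ => circleMap_ne_center hρ.ne'
      have hc1 : Continuous fun θ => deriv (circleMap 0 ρ) θ := by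
        simp only [deriv_circleMap]
        fun_prop
      have hcF : Continuous fun θ : ℝ => F (x + circleMap 0 ρ θ • eJ) := by
        refine hF.continuousOn.comp_continuous (by fun_prop) fun θ => ?_
        exact h3 (closedBall_subset_closedBall (by linarith) (hmemb x hx θ))
      rw [hK]
      have hc2 : Continuous fun θ => (1 / (circleMap 0 ρ θ - 0) : ℂ) ^ 1 := by
        simp only [sub_zero, one_div, pow_one]
        exact ((continuous_circleMap 0 ρ).inv₀ hne)
      have hc3 : Continuous fun θ => ((circleMap 0 ρ θ - 0 : ℂ))⁻¹ := by
        simp only [sub_zero]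
        exact ((continuous_circleMap 0 ρ).inv₀ hne)
      exact hc1.smul (hc2.smul (hc3.smul hcF))
    -- representation of the column on the ball
    have hrep : ∀ x ∈ ball v ρ, fderiv ℂ F x eJ =
        (2 * Real.pi * Complex.I : ℂ)⁻¹ • ∫ θ in (0:ℝ)..2*Real.pi, K x θ := by
      intro x hx
      have hx2 : x ∈ closedBall v (2 * ρ) :=
        closedBall_subset_closedBall (by linarith) (ball_subset_closedBall hx)
      have hder := fderiv_eq_deriv_slice (hFd x (h3 (closedBall_subset_closedBall
        (by linarith) hx2))) eJ
      rw [← hder.deriv, deriv_eq_cauchyCoeff hρ (hs x hx2 eJ heJ1),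
        cauchyPowerSeries_apply]
      rw [show ∀ f : ℂ → ℂ, (∮ z in C(0, ρ), f z) = ∫ θ in (0:ℝ)..2*Real.pi, deriv (circleMap 0 ρ) θ • f (circleMap 0 ρ θ) from fun f => rfl]
    -- differentiate under the integral sign
    have hmain : HasFDerivAt (fun x => ∫ θ in (0:ℝ)..2*Real.pi, K x θ)
        (∫ θ in (0:ℝ)..2*Real.pi, K' v θ) v := by
      refine intervalIntegral.hasFDerivAt_integral_of_dominated_of_fderiv_le
        (𝕜 := ℂ) (bound := fun _ => ρ * ((1/ρ) ^ 1 * (ρ⁻¹ * (m * (C / ρ))))) (ball_mem_nhds v hρ) ?_ ?_ ?_ ?_ ?_ ?_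
      · filter_upwards [ball_mem_nhds v hρ] with x hx
        exact (hKcont x hx).aestronglyMeasurable
      · exact ((hKcont v (mem_ball_self hρ)).intervalIntegrable _ _)
      · borelize ((Fin m → ℂ) →L[ℂ] ℂ)
        have hc1 : Continuous fun θ : ℝ => deriv (circleMap 0 ρ) θ := by
          have : (fun θ : ℝ => deriv (circleMap 0 ρ) θ)
              = fun θ : ℝ => circleMap 0 ρ θ * Complex.I := funext fun θ => by
            simp [deriv_circleMap]
          rw [this]; fun_prop
        have hc2 : Continuous fun θ : ℝ => ((1 : ℂ) / (circleMap 0 ρ θ - 0)) ^ 1 := by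
          simp only [sub_zero, one_div, pow_one]
          exact (continuous_circleMap 0 ρ).inv₀ fun θ => circleMap_ne_center hρ.ne'
        have hc3 : Continuous fun θ : ℝ => ((circleMap 0 ρ θ - 0 : ℂ))⁻¹ := by
          simp only [sub_zero]
          exact (continuous_circleMap 0 ρ).inv₀ fun θ => circleMap_ne_center hρ.ne'
        have hT : MeasureTheory.AEStronglyMeasurable
            (fun θ : ℝ => fderiv ℂ F (v + circleMap 0 ρ θ • eJ))
            (MeasureTheory.volume.restrict (Set.uIoc 0 (2*Real.pi))) :=
          ((measurable_fderiv ℂ F).comp (by fun_prop : Measurable fun θ : ℝ =>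
            v + circleMap 0 ρ θ • eJ)).aestronglyMeasurable
        exact hc1.aestronglyMeasurable.smul
          (hc2.aestronglyMeasurable.smul (hc3.aestronglyMeasurable.smul hT))
      · refine Filter.Eventually.of_forall fun θ _ => ?_
        intro x hx
        have hsmul : ∀ (c : ℂ) (T : (Fin m → ℂ) →L[ℂ] ℂ), ‖c • T‖ = ‖c‖ * ‖T‖ :=
          fun c T => norm_smul c T
        rw [hK']
        simp only [hsmul]
        have h1 : ‖deriv (circleMap 0 ρ) θ‖ = ρ := by
          simp [deriv_circleMap, norm_circleMap_zero, abs_of_pos hρ]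
        have h2 : ‖(1 / (circleMap 0 ρ θ - 0) : ℂ) ^ 1‖ = (1/ρ) ^ 1 := by
          simp [norm_circleMap_zero, abs_of_pos hρ]
        have h3' : ‖((circleMap 0 ρ θ - 0 : ℂ))⁻¹‖ = ρ⁻¹ := by
          simp [norm_circleMap_zero, abs_of_pos hρ]
        rw [h1, h2, h3']
        have := hfb _ (hmemb x hx θ)
        gcongr
      · exact intervalIntegrable_const
      · refine Filter.Eventually.of_forall fun θ _ => ?_
        intro x hx
        have hmem : x + circleMap 0 ρ θ • eJ ∈ U :=
          h3 (closedBall_subset_closedBall (by linarith) (hmemb x hx θ))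
        have ht : HasFDerivAt (fun y : Fin m → ℂ => y + circleMap 0 ρ θ • eJ)
            (ContinuousLinearMap.id ℂ _) x := (hasFDerivAt_id x).add_const _
        have hcomp := ((hFd _ hmem).hasFDerivAt.comp x ht)
        rw [ContinuousLinearMap.comp_id] at hcomp
        exact (hcomp.fun_const_smul ((circleMap 0 ρ θ - 0 : ℂ))⁻¹).fun_const_smul ((1 / (circleMap 0 ρ θ - 0) : ℂ) ^ 1) |>.fun_const_smul (deriv (circleMap 0 ρ) θ)
    -- conclude
    have heq : (fun x => fderiv ℂ F x eJ) =ᶠ[nhds v]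
        fun x => (2 * Real.pi * Complex.I : ℂ)⁻¹ • ∫ θ in (0:ℝ)..2*Real.pi, K x θ := by
      filter_upwards [ball_mem_nhds v hρ] with x hx using hrep x hx
    refine DifferentiableAt.congr_of_eventuallyEq ?_ heq
    exact (hmain.differentiableAt.fun_const_smul _)
  -- assemble: fderiv F is a finite sum of differentiable scalar functions times constants
  have hexp : (fderiv ℂ F) = fun x => ∑ J, (fderiv ℂ F x (Pi.single J 1)) •
      (ContinuousLinearMap.proj (R := ℂ) (φ := fun _ : Fin m => ℂ) J) := by
    funext x
    ext w
    rw [clm_eq_sum (fderiv ℂ F x) w]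
    simp [ContinuousLinearMap.sum_apply, smul_eq_mul, mul_comm]
  rw [hexp]
  exact DifferentiableAt.fun_sum fun J _ => (hUJ J).smul_const _

/-- for a holomorphic `F` on an open set `U ⊆ ℂ^{n+1}`, if the image of the
closed disk of radius `r` under `ζ ↦ v + ζG − ζ²v̄` lies in `U`, then
`(1/(2πi)) ∮_{|ζ|=r} F(v + ζG − ζ²v̄)/ζ³ dζ = (1/2) ∑_{I,J} F_{IJ}(v) Gᴵ Gᴶ − ∑_I F_I(v) v̄ᴵ`. -/
theorem contour_integral_eval (n : ℕ) (U : Set (Fin (n + 1) → ℂ)) (hU : IsOpen U)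
    (hUne : U.Nonempty) (F : (Fin (n + 1) → ℂ) → ℂ) (hF : DifferentiableOn ℂ F U)
    (v : Fin (n + 1) → ℂ) (hv : v ∈ U) (G : Fin (n + 1) → ℂ) (r : ℝ) (hr : 0 < r)
    (hdisk : ∀ ζ : ℂ, ‖ζ‖ ≤ r →
      (fun I => v I + ζ * G I - ζ ^ 2 * conj (v I)) ∈ U) :
    (2 * Real.pi * Complex.I)⁻¹ *
        (∮ ζ in C(0, r), F (fun I => v I + ζ * G I - ζ ^ 2 * conj (v I)) / ζ ^ 3) =
      (1 / 2) * ∑ I, ∑ J, FIJ (n + 1) F v I J * G I * G J -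
        ∑ I, FI (n + 1) F v I * conj (v I) := by
  classical
  set cv : Fin (n+1) → ℂ := fun I => conj (v I) with hcv
  set γ : ℂ → (Fin (n+1) → ℂ) := fun ζ => v + ζ • G - ζ^2 • cv with hγdef
  have hγ_eq : ∀ ζ : ℂ, (fun I => v I + ζ * G I - ζ ^ 2 * conj (v I)) = γ ζ := by
    intro ζ; funext I; simp [hγdef, hcv]
  have hγ0 : γ 0 = v := by funext I; simp [hγdef]
  have hγd : ∀ ζ : ℂ, HasDerivAt γ (G - (2 * ζ) • cv) ζ := by
    intro ζ
    have h1 : HasDerivAt (fun ζ : ℂ => v + ζ • G) G ζ := by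
      simpa using ((hasDerivAt_id ζ).smul_const G).const_add v
    have h2 : HasDerivAt (fun ζ : ℂ => ζ^2 • cv) ((2*ζ) • cv) ζ := by
      have := (hasDerivAt_pow 2 ζ).smul_const cv
      simpa using this
    simpa [hγdef] using h1.fun_sub h2
  set g : ℂ → ℂ := fun ζ => F (γ ζ) with hgdef
  have hγU : ∀ ζ ∈ Metric.closedBall (0:ℂ) r, γ ζ ∈ U := by
    intro ζ hζ
    rw [← hγ_eq]
    exact hdisk ζ (by simpa [Complex.dist_eq] using hζ)
  have hgd : DifferentiableOn ℂ g (Metric.closedBall 0 r) := by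
    intro ζ hζ
    exact ((hF.differentiableAt (hU.mem_nhds (hγU ζ hζ))).comp ζ
      (hγd ζ).differentiableAt).differentiableWithinAt
  -- the contour integral is the second Taylor coefficient of g
  have hcoeff : (2 * Real.pi * Complex.I : ℂ)⁻¹ *
        (∮ ζ in C(0, r), F (fun I => v I + ζ * G I - ζ ^ 2 * conj (v I)) / ζ ^ 3) =
      cauchyPowerSeries g 0 r 2 (fun _ => 1) := by
    rw [cauchyPowerSeries_apply, smul_eq_mul]
    congr 1
    have : (fun z : ℂ => F (fun I => v I + z * G I - z ^ 2 * conj (v I)) / z ^ 3)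
        = fun z : ℂ => (1 / (z - 0) : ℂ) ^ 2 • (z - 0)⁻¹ • g z := by
      funext z
      rw [hγ_eq z]
      rcases eq_or_ne z 0 with rfl | hz
      · simp
      · simp only [sub_zero, smul_eq_mul, hgdef]
        ring
    rw [this]
  -- relate the coefficient to the second derivative of g
  obtain ⟨R, hRr⟩ : ∃ R : NNReal, (R : ℝ) = r := ⟨⟨r, hr.le⟩, rfl⟩
  have hR : 0 < R := by rw [← NNReal.coe_lt_coe]; simpa [hRr] using hr
  have hgd' : DifferentiableOn ℂ g (Metric.closedBall 0 (R:ℝ)) := by rw [hRr]; exact hgd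
  have P : HasFPowerSeriesOnBall g (cauchyPowerSeries g 0 (R:ℝ)) 0 R :=
    hgd'.hasFPowerSeriesOnBall hR
  have key : (Nat.factorial 2) • (cauchyPowerSeries g 0 (R:ℝ) 2 fun _ => 1) = deriv (deriv g) 0 := by
    have k := P.factorial_smul (1 : ℂ) 2
    rw [← iteratedDeriv_eq_iteratedFDeriv, iteratedDeriv_succ, iteratedDeriv_one] at k
    exact k
  -- compute deriv (deriv g) 0 by the chain rule
  have hd2 : DifferentiableAt ℂ (fderiv ℂ F) v := fderiv_differentiableAt hU hF hv
  set B := fderiv ℂ (fderiv ℂ F) v with hB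
  set h : ℂ → ℂ := fun ζ => (fderiv ℂ F (γ ζ)) (G - (2*ζ) • cv) with hh
  have hγcont : Continuous γ := by rw [hγdef]; fun_prop
  have hS : IsOpen (γ ⁻¹' U) := hU.preimage hγcont
  have h0S : (0:ℂ) ∈ γ ⁻¹' U := by
    rw [Set.mem_preimage, hγ0]; exact hv
  have hderiv_g : ∀ ζ ∈ γ ⁻¹' U, HasDerivAt g (h ζ) ζ := fun ζ hζ =>
    (hF.differentiableAt (hU.mem_nhds hζ)).hasFDerivAt.comp_hasDerivAt ζ (hγd ζ)
  have hEq : deriv g =ᶠ[nhds 0] h := by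
    filter_upwards [hS.mem_nhds h0S] with ζ hζ using (hderiv_g ζ hζ).deriv
  have hA : HasDerivAt (fun ζ => fderiv ℂ F (γ ζ)) (B G) 0 := by
    have h0 : HasFDerivAt (fderiv ℂ F) B (γ 0) := by rw [hγ0]; exact hd2.hasFDerivAt
    have hγd0 : HasDerivAt γ G 0 := by simpa using hγd 0
    exact h0.comp_hasDerivAt 0 hγd0
  have hw9 : HasDerivAt (fun ζ : ℂ => G - (2*ζ) • cv) (-((2:ℂ) • cv)) 0 := by
    have h2 : HasDerivAt (fun ζ : ℂ => (2*ζ) • cv) ((2:ℂ) • cv) 0 := by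
      simpa using ((hasDerivAt_id (0:ℂ)).const_mul 2).smul_const cv
    simpa using (hasDerivAt_const (0:ℂ) G).fun_sub h2
  have hh0 : HasDerivAt h (B G (G - (2*(0:ℂ)) • cv) + (fderiv ℂ F (γ 0)) (-((2:ℂ) • cv))) 0 :=
    hA.clm_apply hw9
  have hder2 : deriv (deriv g) 0 = B G G - 2 * (fderiv ℂ F v cv) := by
    rw [hEq.deriv_eq, hh0.deriv, hγ0]
    simp [smul_eq_mul]
    ring
  rw [hder2] at key
  -- expand the right-hand side sums
  have hFIJ : ∀ I J, FIJ (n+1) F v I J = B (Pi.single I 1) (Pi.single J 1) := by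
    intro I J
    have hc := hd2.hasFDerivAt.clm_apply
      (hasFDerivAt_const (Pi.single J 1 : Fin (n+1) → ℂ) v)
    have hdef : FIJ (n+1) F v I J
        = fderiv ℂ (fun x => (fderiv ℂ F x) (Pi.single J 1)) v (Pi.single I 1) := rfl
    rw [hdef, hc.fderiv]
    simp [hB]
  have hsum2 : ∑ I, ∑ J, FIJ (n+1) F v I J * G I * G J = B G G := by
    have step1 : B G G = ∑ I, G I * ((B (Pi.single I 1)) G) := by
      rw [clm_eq_sum B G]
      simp [ContinuousLinearMap.sum_apply, smul_eq_mul]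
    have step2 : ∀ I : Fin (n+1), (B (Pi.single I 1)) G
        = ∑ J, G J * (B (Pi.single I 1)) (Pi.single J 1) := by
      intro I
      rw [clm_eq_sum (B (Pi.single I 1)) G]
      simp [smul_eq_mul]
    rw [step1]
    refine Finset.sum_congr rfl fun I _ => ?_
    rw [step2 I, Finset.mul_sum]
    refine Finset.sum_congr rfl fun J _ => ?_
    rw [hFIJ I J]
    ring
  have hsum1 : ∑ I, FI (n+1) F v I * conj (v I) = fderiv ℂ F v cv := by
    rw [clm_eq_sum (fderiv ℂ F v) cv]
    unfold FI
    refine Finset.sum_congr rfl fun I _ => ?_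
    simp [hcv, smul_eq_mul, mul_comm]
  rw [hcoeff, hsum2, hsum1, ← hRr]
  have key' : (2:ℂ) * (cauchyPowerSeries g 0 (R:ℝ) 2 fun _ => 1)
      = B G G - 2 * fderiv ℂ F v cv := by
    rw [← key]
    norm_num [Nat.factorial]
  linear_combination key' / 2
end

section
/- Fix v ∈ U such that the real symmetric matrix N(v) = (N_{IJ}(v)) is invertible, with inverse entries N^{IJ}. Let t₀ ∈ ℝ and t = (t_I) ∈ ℝ^{n+1} (playing the role of (w + w̄)₀ and (w + w̄)_I), set Q := ∑_{I,J} t_I N^{IJ} t_J − t₀, and assume K(v, v̄)/Q > 0. Define G⁰ ∈ ℝ \ {0} by (G⁰)² = K(v, v̄)/(2Q) and G^I := 2 G⁰ ∑_J N^{IJ} t_J. Then ∂L/∂G^I (v, v̄, G⁰, G) = t_I for all I, and ∂L/∂G⁰ (v, v̄, G⁰, G) = −t₀; i.e. these values of G⁰, G^I solve the stationarity equations of the Legendre transform of L. -/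
open Complex ComplexConjugate

/-- `N_{IJ}(X) = i(F_{IJ}(X) − conj F_{IJ}(X))` (a real number, viewed in `ℝ`). -/
noncomputable def Nmat (m : ℕ) (F : (Fin m → ℂ) → ℂ) (v : Fin m → ℂ) (I J : Fin m) : ℝ :=
  (Complex.I * (FIJ m F v I J - conj (FIJ m F v I J))).re

/-- `K(X, X̄) = i(∑_I conj(Xᴵ) F_I(X) − Xᴵ conj(F_I(X)))` (a real number, viewed in `ℝ`). -/
noncomputable def Kpot (m : ℕ) (F : (Fin m → ℂ) → ℂ) (v : Fin m → ℂ) : ℝ :=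
  (Complex.I * ((∑ I, conj (v I) * FI m F v I) - ∑ I, v I * conj (FI m F v I))).re

/-- `L(v, v̄, G⁰, G) = (1/(4G⁰))(∑_{I,J} N_{IJ}(v) Gᴵ Gᴶ − 2K(v, v̄))`. -/
noncomputable def Lfun (m : ℕ) (F : (Fin m → ℂ) → ℂ) (v : Fin m → ℂ) (G0 : ℝ)
    (G : Fin m → ℝ) : ℝ :=
  (1 / (4 * G0)) * ((∑ I, ∑ J, Nmat m F v I J * G I * G J) - 2 * Kpot m F v)

/-- with `Q = ∑ t_I N^{IJ} t_J − t₀`, `K/Q > 0`, `(G⁰)² = K/(2Q)` and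
`Gᴵ = 2G⁰ ∑_J N^{IJ} t_J`, the values `G⁰, Gᴵ` solve the stationarity equations of the
Legendre transform: `∂L/∂Gᴵ = t_I` and `∂L/∂G⁰ = −t₀`. -/
theorem legendre_stationarity (n : ℕ) (U : Set (Fin (n + 1) → ℂ)) (hU : IsOpen U)
    (hcone : ∀ lam : ℂ, lam ≠ 0 → ∀ X ∈ U, (fun I => lam * X I) ∈ U)
    (F : (Fin (n + 1) → ℂ) → ℂ) (hF : DifferentiableOn ℂ F U)
    (hhom : ∀ lam : ℂ, lam ≠ 0 → ∀ X ∈ U, F (fun I => lam * X I) = lam ^ 2 * F X)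
    (v : Fin (n + 1) → ℂ) (hv : v ∈ U)
    (Nv : Matrix (Fin (n + 1)) (Fin (n + 1)) ℝ)
    (hNv : ∀ I J, Nv I J = Nmat (n + 1) F v I J) (hNdet : IsUnit Nv.det)
    (t0 : ℝ) (t : Fin (n + 1) → ℝ) (Q : ℝ)
    (hQ : Q = (∑ I, ∑ J, t I * Nv⁻¹ I J * t J) - t0)
    (hKQ : 0 < Kpot (n + 1) F v / Q)
    (G0 : ℝ) (hG0 : G0 ≠ 0) (hG0sq : G0 ^ 2 = Kpot (n + 1) F v / (2 * Q))
    (G : Fin (n + 1) → ℝ) (hG : ∀ I, G I = 2 * G0 * ∑ J, Nv⁻¹ I J * t J) :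
    (∀ I, fderiv ℝ (fun g => Lfun (n + 1) F v G0 g) G (Pi.single I 1) = t I) ∧
      deriv (fun s => Lfun (n + 1) F v s G) G0 = -t0 := by
  -- Step 1: symmetry of the second derivatives FIJ (or a contradiction with invertibility).
  have hsym : ∀ I J, FIJ (n + 1) F v I J = FIJ (n + 1) F v J I := by
    by_cases hd : ∀ J, DifferentiableAt ℂ
        (fun x => fderiv ℂ F x (Pi.single J 1)) v
    · -- representation of any CLM via coordinates
      have hrepr : ∀ (L : (Fin (n + 1) → ℂ) →L[ℂ] ℂ),
          L = ∑ J, (L (Pi.single J 1)) •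
            (ContinuousLinearMap.proj J : (Fin (n + 1) → ℂ) →L[ℂ] ℂ) := by
        intro L
        ext y
        rw [ContinuousLinearMap.sum_apply]
        conv_lhs => rw [← Finset.univ_sum_single y, map_sum]
        refine Finset.sum_congr rfl fun J _ => ?_
        have h1 : (Pi.single J (y J) : Fin (n + 1) → ℂ) =
            y J • (Pi.single J 1 : Fin (n + 1) → ℂ) := by
          funext K
          rcases eq_or_ne K J with h | h
          · subst h; simp
          · simp [Pi.single_eq_of_ne h]
        rw [h1, map_smul]
        simp [smul_eq_mul, mul_comm]
      have hdiff : DifferentiableAt ℂ (fderiv ℂ F) v := by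
        have hfun : (fderiv ℂ F) = fun x => ∑ J, (fderiv ℂ F x (Pi.single J 1)) •
            (ContinuousLinearMap.proj J : (Fin (n + 1) → ℂ) →L[ℂ] ℂ) :=
          funext fun x => hrepr _
        rw [hfun]
        exact DifferentiableAt.fun_sum fun J _ => (hd J).smul_const _
      have heven : ∀ᶠ y in nhds v, HasFDerivAt F (fderiv ℂ F y) y := by
        filter_upwards [hU.mem_nhds hv] with y hy
        exact (hF.differentiableAt (hU.mem_nhds hy)).hasFDerivAt
      have hsecond := second_derivative_symmetric_of_eventually heven hdiff.hasFDerivAt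
      have hrel : ∀ I J, FIJ (n + 1) F v I J =
          (fderiv ℂ (fderiv ℂ F) v (Pi.single I 1)) (Pi.single J 1) := by
        intro I J
        have hclm := fderiv_clm_apply (c := fderiv ℂ F)
          (u := fun _ => (Pi.single J 1 : Fin (n + 1) → ℂ)) hdiff (differentiableAt_const _)
        simp only [FIJ, FI]
        rw [hclm]
        simp [ContinuousLinearMap.flip_apply]
      intro I J
      rw [hrel I J, hrel J I, hsecond]
    · push_neg at hd
      obtain ⟨J, hJ⟩ := hd
      exfalso
      have hz : ∀ I, FIJ (n + 1) F v I J = 0 := by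
        intro I
        have hnd : ¬ DifferentiableAt ℂ (fun x => FI (n + 1) F x J) v := by
          simpa [FI] using hJ
        simp [FIJ, fderiv_zero_of_not_differentiableAt hnd]
      have hcol : ∀ I, Nv I J = 0 := by
        intro I
        rw [hNv]
        simp [Nmat, hz I]
      have hdet0 : Nv.det = 0 := Matrix.det_eq_zero_of_column_eq_zero J hcol
      rw [hdet0] at hNdet
      simp at hNdet
  have hNsymm : ∀ I J, Nv I J = Nv J I := by
    intro I J
    rw [hNv, hNv]
    simp [Nmat, hsym I J]
  -- Step 2: algebraic facts.
  have hmv : ∀ I, (Nv⁻¹.mulVec t) I = ∑ K, Nv⁻¹ I K * t K := by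
    intro I; simp [Matrix.mulVec, dotProduct]
  have hkey : ∀ I, ∑ J, Nv I J * G J = 2 * G0 * t I := by
    intro I
    have h0 : Nv.mulVec (Nv⁻¹.mulVec t) = t := by
      rw [Matrix.mulVec_mulVec, Matrix.mul_nonsing_inv _ hNdet, Matrix.one_mulVec]
    have h1 := congrFun h0 I
    simp only [Matrix.mulVec, dotProduct] at h1
    calc ∑ J, Nv I J * G J = 2 * G0 * ∑ J, Nv I J * (Nv⁻¹.mulVec t) J := by
          rw [Finset.mul_sum]
          refine Finset.sum_congr rfl fun J _ => ?_
          rw [hG J, hmv J]; ring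
      _ = 2 * G0 * t I := by
          rw [show ∑ J, Nv I J * (Nv⁻¹.mulVec t) J = t I from h1]
  have hkey' : ∀ I, ∑ A, Nv A I * G A = 2 * G0 * t I := by
    intro I
    rw [← hkey I]
    exact Finset.sum_congr rfl fun A _ => by rw [hNsymm A I]
  have hQne : Q ≠ 0 := by
    intro h
    rw [h, div_zero] at hKQ
    exact lt_irrefl 0 hKQ
  have hk : Kpot (n + 1) F v = 2 * Q * G0 ^ 2 := by
    field_simp at hG0sq
    linarith
  have hSval : ∑ I, ∑ J, Nv I J * G I * G J = 4 * G0 ^ 2 * (Q + t0) := by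
    have h1 : ∀ I, ∑ J, Nv I J * G I * G J = G I * (2 * G0 * t I) := by
      intro I
      rw [← hkey I, Finset.mul_sum]
      exact Finset.sum_congr rfl fun J _ => by ring
    rw [Finset.sum_congr rfl fun I _ => h1 I]
    have h2 : ∑ I, G I * (2 * G0 * t I) =
        4 * G0 ^ 2 * ∑ I, ∑ J, t I * Nv⁻¹ I J * t J := by
      rw [Finset.mul_sum]
      refine Finset.sum_congr rfl fun I _ => ?_
      rw [hG I, show (2 * G0 * ∑ J, Nv⁻¹ I J * t J) * (2 * G0 * t I) =
        4 * G0 ^ 2 * ((∑ J, Nv⁻¹ I J * t J) * t I) from by ring, Finset.sum_mul]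
      congr 1
      exact Finset.sum_congr rfl fun J _ => by ring
    rw [h2, show ∑ I, ∑ J, t I * Nv⁻¹ I J * t J = Q + t0 from by rw [hQ]; ring]
  -- Step 3: derivatives.
  have hproj : ∀ (J : Fin (n + 1)), HasFDerivAt (fun g : Fin (n + 1) → ℝ => g J)
      (ContinuousLinearMap.proj J : (Fin (n + 1) → ℝ) →L[ℝ] ℝ) G :=
    fun J => hasFDerivAt_apply J G
  have hsum : HasFDerivAt (fun g : Fin (n + 1) → ℝ => ∑ A, ∑ B, Nv A B * g A * g B)
      (∑ A, ∑ B, ((Nv A B * G A) • ContinuousLinearMap.proj B +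
        G B • (Nv A B • (ContinuousLinearMap.proj A : (Fin (n + 1) → ℝ) →L[ℝ] ℝ)))) G :=
    HasFDerivAt.fun_sum fun A _ => HasFDerivAt.fun_sum fun B _ =>
      ((hproj A).const_mul (Nv A B)).mul (hproj B)
  have hL : HasFDerivAt (fun g => Lfun (n + 1) F v G0 g)
      ((1 / (4 * G0)) • (∑ A, ∑ B, ((Nv A B * G A) • ContinuousLinearMap.proj B +
        G B • (Nv A B • (ContinuousLinearMap.proj A : (Fin (n + 1) → ℝ) →L[ℝ] ℝ))))) G := by
    simp only [Lfun, ← hNv]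
    exact (hsum.sub_const (2 * Kpot (n + 1) F v)).const_mul (1 / (4 * G0))
  constructor
  · intro I
    rw [hL.fderiv]
    simp only [ContinuousLinearMap.smul_apply, ContinuousLinearMap.sum_apply,
      ContinuousLinearMap.add_apply, ContinuousLinearMap.proj_apply, Pi.single_apply,
      smul_eq_mul, mul_ite, mul_one, mul_zero, Finset.sum_ite_eq, Finset.sum_ite_eq',
      Finset.mem_univ, if_true, Finset.sum_add_distrib]
    rw [Finset.sum_comm]
    simp only [Finset.sum_ite_eq', Finset.mem_univ, if_true]
    rw [hkey' I]
    rw [show (∑ y : Fin (n + 1), G y * Nv I y) = ∑ y, Nv I y * G y from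
      Finset.sum_congr rfl fun y _ => mul_comm _ _, hkey I]
    field_simp
    ring
  · have h1 : HasDerivAt (fun s : ℝ => 4 * s) 4 G0 := by
      simpa using (hasDerivAt_id G0).const_mul (4 : ℝ)
    have h2 := h1.inv (mul_ne_zero four_ne_zero hG0)
    have h3 := h2.mul_const
      ((∑ A, ∑ B, Nv A B * G A * G B) - 2 * Kpot (n + 1) F v)
    have h4 : deriv (fun s => Lfun (n + 1) F v s G) G0 =
        -4 / (4 * G0) ^ 2 * ((∑ A, ∑ B, Nv A B * G A * G B) - 2 * Kpot (n + 1) F v) := by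
      simp only [Lfun, ← hNv, one_div]
      exact h3.deriv
    rw [h4, hSval, hk]
    field_simp
    ring
end

section
/- Fix v ∈ U with N(v) invertible (inverse entries N^{IJ}), let t₀ ∈ ℝ, t ∈ ℝ^{n+1}, Q := ∑_{I,J} t_I N^{IJ} t_J − t₀, and assume K(v, v̄)/Q > 0. Let G⁰, G^I be the stationary values, i.e. (G⁰)² = K(v, v̄)/(2Q) and G^I = 2 G⁰ ∑_J N^{IJ} t_J. Then the Legendre transform χ := L(v, v̄, G⁰, G) + t₀ G⁰ − ∑_I t_I G^I satisfies χ = −K(v, v̄)/G⁰, and hence χ² = 2 K(v, v̄) ( ∑_{I,J} t_I N^{IJ} t_J − t₀ ). In particular, up to sign, χ = √2 · √K(v, v̄) · √( ∑_{I,J} t_I N^{IJ} t_J − t₀ ), the hyperkähler potential of the c-map. -/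
open Complex ComplexConjugate

/-- at the stationary point of the Legendre transform, the hyperkähler
potential `χ = L + t₀G⁰ − ∑ t_I Gᴵ` satisfies `χ = −K/G⁰`, hence
`χ² = 2K(∑ t_I N^{IJ} t_J − t₀)`; in particular, up to sign,
`χ = √2 √K √(∑ t_I N^{IJ} t_J − t₀)`, the hyperkähler potential of the c-map. -/
theorem hk_potential_of_legendre (n : ℕ) (U : Set (Fin (n + 1) → ℂ)) (hU : IsOpen U)
    (hcone : ∀ lam : ℂ, lam ≠ 0 → ∀ X ∈ U, (fun I => lam * X I) ∈ U)
    (F : (Fin (n + 1) → ℂ) → ℂ) (hF : DifferentiableOn ℂ F U)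
    (hhom : ∀ lam : ℂ, lam ≠ 0 → ∀ X ∈ U, F (fun I => lam * X I) = lam ^ 2 * F X)
    (v : Fin (n + 1) → ℂ) (hv : v ∈ U)
    (Nv : Matrix (Fin (n + 1)) (Fin (n + 1)) ℝ)
    (hNv : ∀ I J, Nv I J = Nmat (n + 1) F v I J) (hNdet : IsUnit Nv.det)
    (t0 : ℝ) (t : Fin (n + 1) → ℝ) (Q : ℝ)
    (hQ : Q = (∑ I, ∑ J, t I * Nv⁻¹ I J * t J) - t0)
    (hKQ : 0 < Kpot (n + 1) F v / Q)
    (G0 : ℝ) (hG0 : G0 ≠ 0) (hG0sq : G0 ^ 2 = Kpot (n + 1) F v / (2 * Q))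
    (G : Fin (n + 1) → ℝ) (hG : ∀ I, G I = 2 * G0 * ∑ J, Nv⁻¹ I J * t J)
    (chi : ℝ) (hchi : chi = Lfun (n + 1) F v G0 G + t0 * G0 - ∑ I, t I * G I) :
    chi = -(Kpot (n + 1) F v) / G0 ∧
      chi ^ 2 = 2 * Kpot (n + 1) F v * ((∑ I, ∑ J, t I * Nv⁻¹ I J * t J) - t0) ∧
      (0 < Kpot (n + 1) F v →
        |chi| = Real.sqrt 2 * Real.sqrt (Kpot (n + 1) F v) *
          Real.sqrt ((∑ I, ∑ J, t I * Nv⁻¹ I J * t J) - t0)) := by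

  set K := Kpot (n + 1) F v with hKdef
  set u : Fin (n + 1) → ℝ := Nv⁻¹.mulVec t with hu
  have hQne : Q ≠ 0 := by
    rcases div_pos_iff.mp hKQ with ⟨_, h⟩ | ⟨_, h⟩ <;> [exact ne_of_gt h; exact ne_of_lt h]
  have hK : K = 2 * Q * G0 ^ 2 := by
    field_simp at hG0sq; linarith
  have hmul : Nv.mulVec u = t := by
    rw [hu, Matrix.mulVec_mulVec, Matrix.mul_nonsing_inv Nv hNdet, Matrix.one_mulVec]
  have huI : ∀ I, ∑ J, Nv I J * u J = t I := by
    intro I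
    have := congrFun hmul I
    simpa [Matrix.mulVec, dotProduct] using this
  have hS : (∑ I, ∑ J, t I * Nv⁻¹ I J * t J) = ∑ I, t I * u I := by
    refine Finset.sum_congr rfl fun I _ => ?_
    rw [hu]
    simp [Matrix.mulVec, dotProduct, Finset.mul_sum, mul_assoc]
  set S := ∑ I, t I * u I with hSdef
  have hGu : ∀ I, G I = 2 * G0 * u I := by
    intro I
    rw [hG I, hu]
    simp [Matrix.mulVec, dotProduct]
  have key : (∑ I, ∑ J, Nmat (n + 1) F v I J * G I * G J) = 4 * G0 ^ 2 * S := by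
    have : ∀ I, ∑ J, Nmat (n + 1) F v I J * G I * G J
        = 4 * G0 ^ 2 * (u I * t I) := by
      intro I
      calc ∑ J, Nmat (n + 1) F v I J * G I * G J
          = (2 * G0 * u I) * (2 * G0 * (∑ J, Nv I J * u J)) := by
            rw [Finset.mul_sum, Finset.mul_sum]
            refine Finset.sum_congr rfl fun J _ => ?_
            rw [← hNv I J, hGu I, hGu J]; ring
        _ = 4 * G0 ^ 2 * (u I * t I) := by rw [huI I]; ring
    rw [Finset.sum_congr rfl fun I _ => this I, ← Finset.mul_sum, hSdef]
    congr 1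
    exact Finset.sum_congr rfl fun I _ => by ring
  have htG : (∑ I, t I * G I) = 2 * G0 * S := by
    rw [hSdef, Finset.mul_sum]
    exact Finset.sum_congr rfl fun I _ => by rw [hGu I]; ring
  have hchi' : chi = -K / G0 := by
    rw [hchi, Lfun, key, htG, ← hKdef]
    have hQS : S = Q + t0 := by rw [hQ, hS]; ring
    rw [hQS, hK]
    field_simp
    ring
  refine ⟨hchi', ?_, ?_⟩
  · have h2 : chi ^ 2 = 2 * K * Q := by
      rw [hchi']
      field_simp
      linear_combination K * hK
    rw [h2, hQ]
  · intro hKpos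
    have hQpos : 0 < Q := by
      rcases div_pos_iff.mp hKQ with ⟨_, h⟩ | ⟨h, _⟩
      · exact h
      · linarith
    have h2 : chi ^ 2 = 2 * K * Q := by
      rw [hchi']
      field_simp
      linear_combination hK
    have : |chi| = Real.sqrt (2 * K * Q) := by
      rw [← h2, Real.sqrt_sq_eq_abs]
    rw [this, ← hQ, hQ] at *
    rw [Real.sqrt_mul (by positivity), Real.sqrt_mul (by norm_num : (0:ℝ) ≤ 2)]
end

section
/- Fix v ∈ U with N(v) invertible and let A ∈ ℝ^{n+1}, B ∈ ℝ^{n+1}, σ ∈ ℝ, φ ∈ ℝ. Define complex numbers w_I := i ∑_J F_{IJ}(v) A^J − (i/2) B_I and w₀ := i ∑_{I,J} F_{IJ}(v) A^I A^J − i(σ + (1/2) ∑_I A^I B_I) − e^φ. Then: (a) w_I + conj(w_I) = ∑_J N_{IJ}(v) A^J for every I; (b) ∑_{I,J} (w + w̄)_I N^{IJ}(v) (w + w̄)_J − (w₀ + conj(w₀)) = 2 e^φ; and consequently (c) the stationary values from the Legendre transform, G^I = 2G⁰ ∑_J N^{IJ}(w + w̄)_J and (G⁰)² = K(v, v̄)/(2[∑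 (w + w̄)_I N^{IJ}(w + w̄)_J − (w + w̄)₀]), satisfy G^I/G⁰ = 2A^I and K(v, v̄)/(G⁰)² = 4e^φ (assuming K(v, v̄) > 0). -/
open Complex ComplexConjugate

lemma iSubConj_real (z : ℂ) :
    (((Complex.I * (z - conj z)).re : ℝ) : ℂ) = Complex.I * (z - conj z) := by
  have him : (Complex.I * (z - conj z)).im = 0 := by
    simp [Complex.mul_im, Complex.sub_re]
  exact Complex.ext (by simp) (by simp [him])

/-- with `w_I = i∑_J F_{IJ}(v)Aᴶ − (i/2)B_I` and
`w₀ = i∑_{I,J} F_{IJ}(v)AᴵAᴶ − i(σ + (1/2)∑_I AᴵB_I) − e^φ`, one has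
(a) `w_I + conj w_I = ∑_J N_{IJ}(v) Aᴶ`;
(b) `∑_{I,J} (w+w̄)_I N^{IJ} (w+w̄)_J − (w₀+conj w₀) = 2e^φ`;
(c) the stationary values `Gᴵ = 2G⁰∑_J N^{IJ}(w+w̄)_J`,
`(G⁰)² = K/(2[∑ (w+w̄)_I N^{IJ} (w+w̄)_J − (w+w̄)₀])` satisfy `Gᴵ/G⁰ = 2Aᴵ` and
`K/(G⁰)² = 4e^φ` (assuming `K(v,v̄) > 0`). -/
theorem qk_coordinates (n : ℕ) (U : Set (Fin (n + 1) → ℂ)) (hU : IsOpen U)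
    (hcone : ∀ lam : ℂ, lam ≠ 0 → ∀ X ∈ U, (fun I => lam * X I) ∈ U)
    (F : (Fin (n + 1) → ℂ) → ℂ) (hF : DifferentiableOn ℂ F U)
    (hhom : ∀ lam : ℂ, lam ≠ 0 → ∀ X ∈ U, F (fun I => lam * X I) = lam ^ 2 * F X)
    (v : Fin (n + 1) → ℂ) (hv : v ∈ U)
    (Nv : Matrix (Fin (n + 1)) (Fin (n + 1)) ℝ)
    (hNv : ∀ I J, Nv I J = Nmat (n + 1) F v I J) (hNdet : IsUnit Nv.det)
    (A B : Fin (n + 1) → ℝ) (σ φ : ℝ)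
    (w : Fin (n + 1) → ℂ) (w0 : ℂ)
    (hw : ∀ I, w I = Complex.I * (∑ J, FIJ (n + 1) F v I J * (A J : ℂ)) -
      Complex.I / 2 * (B I : ℂ))
    (hw0 : w0 = Complex.I * (∑ I, ∑ J, FIJ (n + 1) F v I J * (A I : ℂ) * (A J : ℂ)) -
      Complex.I * ((σ : ℂ) + (1 / 2) * ∑ I, (A I : ℂ) * (B I : ℂ)) - (Real.exp φ : ℂ))
    (t : Fin (n + 1) → ℝ) (ht : ∀ I, (t I : ℂ) = w I + conj (w I))
    (t0 : ℝ) (ht0 : (t0 : ℂ) = w0 + conj w0)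
    (hK : 0 < Kpot (n + 1) F v)
    (G0 : ℝ) (hG0 : G0 ≠ 0)
    (hG0sq : G0 ^ 2 = Kpot (n + 1) F v / (2 * ((∑ I, ∑ J, t I * Nv⁻¹ I J * t J) - t0)))
    (G : Fin (n + 1) → ℝ) (hG : ∀ I, G I = 2 * G0 * ∑ J, Nv⁻¹ I J * t J) :
    (∀ I, w I + conj (w I) = ((∑ J, Nv I J * A J : ℝ) : ℂ)) ∧
      ((∑ I, ∑ J, t I * Nv⁻¹ I J * t J) - t0 = 2 * Real.exp φ) ∧
      (∀ I, G I / G0 = 2 * A I) ∧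
      Kpot (n + 1) F v / G0 ^ 2 = 4 * Real.exp φ := by

  have hNc : ∀ I J, ((Nv I J : ℝ) : ℂ) =
      Complex.I * (FIJ (n + 1) F v I J - conj (FIJ (n + 1) F v I J)) := by
    intro I J; rw [hNv]; exact iSubConj_real _
  have parta : ∀ I, w I + conj (w I) = ((∑ J, Nv I J * A J : ℝ) : ℂ) := by
    intro I
    have h1 : w I + conj (w I) =
        Complex.I * (∑ J, FIJ (n + 1) F v I J * (A J : ℂ)) -
        Complex.I * (∑ J, conj (FIJ (n + 1) F v I J) * (A J : ℂ)) := by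
      rw [hw I]
      simp only [map_sub, map_mul, map_sum, map_div₀, Complex.conj_I, Complex.conj_ofReal,
        Complex.conj_ofNat]
      ring
    rw [h1, Finset.mul_sum, Finset.mul_sum, ← Finset.sum_sub_distrib]
    push_cast
    refine Finset.sum_congr rfl fun J _ => ?_
    rw [hNc I J]; ring
  have htI : ∀ I, t I = ∑ J, Nv I J * A J := by
    intro I
    have := (ht I).trans (parta I)
    exact_mod_cast this
  have ht0' : t0 = (∑ I, ∑ J, Nv I J * A I * A J) - 2 * Real.exp φ := by
    have h1 : w0 + conj w0 =
        Complex.I * (∑ I, ∑ J, FIJ (n + 1) F v I J * (A I : ℂ) * (A J : ℂ)) -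
        Complex.I * (∑ I, ∑ J, conj (FIJ (n + 1) F v I J) * (A I : ℂ) * (A J : ℂ)) -
        2 * (Real.exp φ : ℂ) := by
      rw [hw0]
      simp only [map_sub, map_mul, map_add, map_sum, map_div₀, map_one, Complex.conj_I,
        Complex.conj_ofReal, Complex.conj_ofNat]
      ring
    have h2 : (t0 : ℂ) = ((∑ I, ∑ J, Nv I J * A I * A J : ℝ) : ℂ) - 2 * (Real.exp φ : ℂ) := by
      rw [ht0, h1, Finset.mul_sum, Finset.mul_sum, ← Finset.sum_sub_distrib]
      push_cast
      congr 1
      refine Finset.sum_congr rfl fun I _ => ?_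
      rw [Finset.mul_sum, Finset.mul_sum, ← Finset.sum_sub_distrib]
      refine Finset.sum_congr rfl fun J _ => ?_
      rw [hNc I J]; ring
    exact_mod_cast h2
  have hmv : ∀ I, ∑ J, Nv⁻¹ I J * t J = A I := by
    have hteq : t = Nv.mulVec A := by
      funext I; rw [htI I]; simp [Matrix.mulVec, dotProduct]
    have : Nv⁻¹.mulVec t = A := by
      rw [hteq, Matrix.mulVec_mulVec, Matrix.nonsing_inv_mul Nv hNdet, Matrix.one_mulVec]
    intro I
    have := congrFun this I
    simpa [Matrix.mulVec, dotProduct] using this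
  have partb : (∑ I, ∑ J, t I * Nv⁻¹ I J * t J) - t0 = 2 * Real.exp φ := by
    have h1 : (∑ I, ∑ J, t I * Nv⁻¹ I J * t J) = ∑ I, t I * A I := by
      refine Finset.sum_congr rfl fun I _ => ?_
      rw [← hmv I, Finset.mul_sum]
      refine Finset.sum_congr rfl fun J _ => ?_; ring
    have h2 : ∑ I, t I * A I = ∑ I, ∑ J, Nv I J * A I * A J := by
      refine Finset.sum_congr rfl fun I _ => ?_
      rw [htI I, Finset.sum_mul]
      refine Finset.sum_congr rfl fun J _ => ?_; ring
    rw [h1, h2, ht0']; ring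
  refine ⟨parta, partb, fun I => ?_, ?_⟩
  · rw [hG I, hmv I]; field_simp
  · rw [hG0sq, partb]
    have hKne : Kpot (n + 1) F v ≠ 0 := ne_of_gt hK
    have he : Real.exp φ ≠ 0 := Real.exp_ne_zero φ
    field_simp
    ring
end
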